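/- Let n ≥ 1, let C be a cyclic ZMod 2-submodule of (Fin n → ZMod 2), and let l ∈ {0, 1, …, n−1}. Then the following are equivalent: (i) for all p, q ∈ {0, 1, …, n−1} with p ≠ q, L(v_p, l) + L(v_q, l) ∉ C; (ii) for all m ∈ {1, …, n−1}, v_m ∉ C. (This is the intrinsic, matrix-free form of Lemma 3 of the paper: since errors have the same syndrome exactly when their difference lies in the kernel of the parity check matrix, which equals C, the shifted consecutive error set E_{l,n} is distinguishable if and only if no nonzero proper consecutive tail vector lies in C.) -/

import Mathlib

/-- The consecutive tail vector `v_p`: indicator of the last `p` coordinates. -/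
def tailVec (n p : ℕ) : Fin n → ZMod 2 := fun j => if n - p ≤ j.val then 1 else 0

/-- Left cyclic shift by `l` of a vector `v : Fin n → ZMod 2`. -/
def shiftL {n : ℕ} (v : Fin n → ZMod 2) (l : ℕ) : Fin n → ZMod 2 :=
  fun j => v ⟨(j.val + l) % n, Nat.mod_lt _ j.pos⟩

/-- A code is cyclic if it is invariant under left cyclic shifts. -/
def IsCyclicCode {n : ℕ} (C : Submodule (ZMod 2) (Fin n → ZMod 2)) : Prop :=
  ∀ v ∈ C, ∀ l : ℕ, shiftL v l ∈ C

/-- The dual code `C⊥` with respect to the standard bilinear form. -/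
def dualCode {n : ℕ} (C : Submodule (ZMod 2) (Fin n → ZMod 2)) :
    Submodule (ZMod 2) (Fin n → ZMod 2) where
  carrier := {u | ∀ w ∈ C, ∑ j, u j * w j = 0}
  add_mem' := by
    intro a b ha hb w hw
    simp only [Set.mem_setOf_eq, Pi.add_apply, add_mul] at *
    rw [Finset.sum_add_distrib, ha w hw, hb w hw, add_zero]
  zero_mem' := by
    intro w hw
    simp
  smul_mem' := by
    intro c a ha w hw
    simp only [Set.mem_setOf_eq, Pi.smul_apply, smul_eq_mul, mul_assoc] at *
    rw [← Finset.mul_sum, ha w hw, mul_zero]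

/-!
Over `ZMod 2`, for `p ≤ q` the sum `v_p + v_q` is the indicator of a block of `q - p` consecutive
coordinates, i.e. the shift of `v_{q-p}` by `p`. A cyclic code is closed under shifts and (shifting
further round the cycle) under their inverses, so `L(v_p, l) + L(v_q, l) ∈ C` iff `v_{q-p} ∈ C`.
Taking `p = 0` gives one direction, and `q - p` ranges over `1, …, n - 1` for the other.
-/

section Shift

variable {n : ℕ}

lemma shiftL_add (u v : Fin n → ZMod 2) (l : ℕ) :
    shiftL (u + v) l = shiftL u l + shiftL v l := rfl

lemma shiftL_shiftL (v : Fin n → ZMod 2) (a b : ℕ) :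
    shiftL (shiftL v a) b = shiftL v (b + a) := by
  funext j
  simp only [shiftL, Nat.mod_add_mod, Nat.add_assoc]

lemma shiftL_shiftL_sub_mod (v : Fin n → ZMod 2) (l : ℕ) :
    shiftL (shiftL v l) (n - l % n) = v := by
  funext j
  rw [shiftL_shiftL]
  refine congrArg v (Fin.ext ?_)
  have hmod : l % n < n := Nat.mod_lt _ j.pos
  have hsplit : j.val + (n - l % n + l) = j.val + n * (l / n + 1) := by
    have := Nat.mod_add_div l n
    rw [Nat.mul_add_one]
    omega
  simp only [hsplit, Nat.add_mul_mod_self_left, Nat.mod_eq_of_lt j.isLt]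

lemma IsCyclicCode.shiftL_mem_iff {C : Submodule (ZMod 2) (Fin n → ZMod 2)}
    (hC : IsCyclicCode C) (w : Fin n → ZMod 2) (l : ℕ) :
    shiftL w l ∈ C ↔ w ∈ C := by
  refine ⟨fun h => ?_, fun h => hC w h l⟩
  simpa only [shiftL_shiftL_sub_mod] using hC _ h (n - l % n)

end Shift

lemma tailVec_add_tailVec {n p q : ℕ} (hpq : p ≤ q) (hq : q ≤ n) :
    tailVec n p + tailVec n q = shiftL (tailVec n (q - p)) p := by
  funext j
  have hj := j.isLt
  simp only [tailVec, shiftL, Pi.add_apply]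
  by_cases h : j.val + p < n
  · simp only [Nat.mod_eq_of_lt h]
    split_ifs <;> first | rfl | omega
  · have hm : (j.val + p) % n = j.val + p - n := by
      rw [Nat.mod_eq_sub_mod (by omega), Nat.mod_eq_of_lt (by omega)]
    simp only [hm]
    split_ifs <;> first | rfl | omega

lemma IsCyclicCode.shiftL_tailVec_add_mem_iff {n : ℕ} {C : Submodule (ZMod 2) (Fin n → ZMod 2)}
    (hC : IsCyclicCode C) (l : ℕ) {p q : ℕ} (hpq : p ≤ q) (hq : q ≤ n) :
    shiftL (tailVec n p) l + shiftL (tailVec n q) l ∈ C ↔ tailVec n (q - p) ∈ C := by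
  rw [← shiftL_add, tailVec_add_tailVec hpq hq, hC.shiftL_mem_iff, hC.shiftL_mem_iff]

theorem stmt4_general (n : ℕ) (C : Submodule (ZMod 2) (Fin n → ZMod 2))
    (hC : IsCyclicCode C) (l : ℕ) :
    (∀ p q : ℕ, p < n → q < n → p ≠ q →
        shiftL (tailVec n p) l + shiftL (tailVec n q) l ∉ C) ↔
      (∀ m : ℕ, 1 ≤ m → m ≤ n - 1 → tailVec n m ∉ C) := by
  constructor
  · intro h m hm1 hm2 hm
    refine h 0 m (by omega) (by omega) (by omega) ?_
    rwa [hC.shiftL_tailVec_add_mem_iff l (Nat.zero_le m) (by omega), Nat.sub_zero]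
  · intro h p q hp hq hpq hmem
    rcases hpq.lt_or_gt with hlt | hlt
    · rw [hC.shiftL_tailVec_add_mem_iff l hlt.le hq.le] at hmem
      exact h (q - p) (by omega) (by omega) hmem
    · rw [add_comm, hC.shiftL_tailVec_add_mem_iff l hlt.le hp.le] at hmem
      exact h (p - q) (by omega) (by omega) hmem

theorem stmt4 (n : ℕ) (hn : 1 ≤ n) (C : Submodule (ZMod 2) (Fin n → ZMod 2))
    (hC : IsCyclicCode C) (l : ℕ) (hl : l < n) :
    (∀ p q : ℕ, p < n → q < n → p ≠ q →
        shiftL (tailVec n p) l + shiftL (tailVec n q) l ∉ C) ↔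
      (∀ m : ℕ, 1 ≤ m → m ≤ n - 1 → tailVec n m ∉ C) :=
  stmt4_general n C hC l
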